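/- arXiv:1006.0706 — 2 statements merged into one kernel-verified Lean document; each statement's English description precedes it below -/
import Mathlib

section
/- Let R be a TRS, u a non-constant ground proper subterm of some right-hand side of R, c a fresh constant, and R' = {c → u} ∪ { l → NF_{u→c}(r) : l → r ∈ R } (where NF_{u→c}(r) replaces all occurrences of u in r by c). Then for any permutative theory E, R/E is terminating if and only if R'/E is terminating. -/
/-- First-order terms over function symbols `F` and variables `V`. -/
inductive Tm (F V : Type) : Type
  | var : V → Tm F V
  | app : F → List (Tm F V) → Tm F V

namespace Tm

variable {F V : Type}

/-- Height of a term: 0 for variables and constants. -/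
def height : Tm F V → ℕ
  | var _ => 0
  | app _ ts => ts.attach.foldr (fun t m => max (height t.1 + 1) m) 0
decreasing_by all_goals (simp_wf; have := List.sizeOf_lt_of_mem t.2; omega)

/-- Size (number of positions) of a term. -/
def size : Tm F V → ℕ
  | var _ => 1
  | app _ ts => 1 + (ts.attach.map (fun t => size t.1)).sum
decreasing_by all_goals (simp_wf; have := List.sizeOf_lt_of_mem t.2; omega)

/-- Apply a substitution. -/
def subst (σ : V → Tm F V) : Tm F V → Tm F V
  | var x => σ x
  | app f ts => app f (ts.attach.map (fun t => subst σ t.1))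
decreasing_by all_goals (simp_wf; have := List.sizeOf_lt_of_mem t.2; omega)

/-- List of variable occurrences. -/
def varList : Tm F V → List V
  | var x => [x]
  | app _ ts => (ts.attach.map (fun t => varList t.1)).flatten
decreasing_by all_goals (simp_wf; have := List.sizeOf_lt_of_mem t.2; omega)

/-- List of function-symbol occurrences. -/
def symList : Tm F V → List F
  | var _ => []
  | app f ts => f :: (ts.attach.map (fun t => symList t.1)).flatten
decreasing_by all_goals (simp_wf; have := List.sizeOf_lt_of_mem t.2; omega)

/-- The subterm at a position (positions are lists of argument indices). -/
def subAt : Tm F V → List ℕ → Option (Tm F V)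
  | t, [] => some t
  | var _, _ :: _ => none
  | app _ ts, i :: p => match ts[i]? with
      | some u => subAt u p
      | none => none

/-- Replace the subterm at a position. -/
def replAt : Tm F V → List ℕ → Tm F V → Option (Tm F V)
  | _, [], s => some s
  | var _, _ :: _, _ => none
  | app f ts, i :: p, s => match ts[i]? with
      | some u => (replAt u p s).map (fun u' => app f (ts.set i u'))
      | none => none

/-- `p` is a position of `t`. -/
def IsPos (t : Tm F V) (p : List ℕ) : Prop := (t.subAt p).isSome

/-- A term is a constant if it is a nullary function application. -/
def IsConst (t : Tm F V) : Prop := ∃ f : F, t = app f []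

def Ground (t : Tm F V) : Prop := t.varList = []

/-- A term is linear if each variable occurs at most once. -/
def Linear (t : Tm F V) : Prop := t.varList.Nodup

/-- A term is flat if its height is at most 1. -/
def Flat (t : Tm F V) : Prop := t.height ≤ 1

/-- A term is shallow if all variables occur at depth at most 1. -/
def Shallow (t : Tm F V) : Prop :=
  ∀ (p : List ℕ) (x : V), t.subAt p = some (var x) → p.length ≤ 1

end Tm

/-- A rewrite rule. -/
structure Rule (F V : Type) where
  lhs : Tm F V
  rhs : Tm F V

namespace Rule

variable {F V : Type}

/-- Standard well-formedness: the lhs is not a variable and variables of the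
rhs occur in the lhs. -/
def WF (r : Rule F V) : Prop :=
  (∀ x : V, r.lhs ≠ Tm.var x) ∧ ∀ x ∈ r.rhs.varList, x ∈ r.lhs.varList

def RightFlat (r : Rule F V) : Prop := r.rhs.Flat
def RightLinear (r : Rule F V) : Prop := r.rhs.Linear
def RightShallow (r : Rule F V) : Prop := r.rhs.Shallow
def FlatRule (r : Rule F V) : Prop := r.lhs.Flat ∧ r.rhs.Flat
def ShallowRule (r : Rule F V) : Prop := r.lhs.Shallow ∧ r.rhs.Shallow
def Collapsing (r : Rule F V) : Prop := ∃ x : V, r.rhs = Tm.var x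

/-- A permutative rule: linear, flat, height-preserving and variable-preserving. -/
def Permutative (r : Rule F V) : Prop :=
  r.WF ∧ r.lhs.Linear ∧ r.rhs.Linear ∧ r.lhs.Flat ∧ r.rhs.Flat ∧
    r.lhs.height = r.rhs.height ∧ ∀ x : V, x ∈ r.lhs.varList ↔ x ∈ r.rhs.varList

end Rule

/-- A permutative theory: a symmetric set of permutative rules. -/
def PermutativeTheory {F V : Type} (E : Set (Rule F V)) : Prop :=
  (∀ r ∈ E, r.Permutative) ∧ ∀ r ∈ E, (⟨r.rhs, r.lhs⟩ : Rule F V) ∈ E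

section Rewriting

variable {F V : Type}

/-- One rewrite step with rule `l → r` at position `p` using substitution `σ`. -/
def RewWith (l r : Tm F V) (p : List ℕ) (σ : V → Tm F V) (s t : Tm F V) : Prop :=
  s.subAt p = some (l.subst σ) ∧ s.replAt p (r.subst σ) = some t

/-- One rewrite step with TRS `R` at position `p`. -/
def RewAt (R : Set (Rule F V)) (p : List ℕ) (s t : Tm F V) : Prop :=
  ∃ r ∈ R, ∃ σ : V → Tm F V, RewWith r.lhs r.rhs p σ s t

/-- One rewrite step with TRS `R`. -/
def Rew (R : Set (Rule F V)) (s t : Tm F V) : Prop := ∃ p, RewAt R p s t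

/-- Reachability: reflexive-transitive closure of one-step rewriting. -/
def Reach (R : Set (Rule F V)) : Tm F V → Tm F V → Prop :=
  Relation.ReflTransGen (Rew R)

/-- One rewrite step with `R` modulo `E` : `s →E* · →R · →E* t`. -/
def RewMod (R E : Set (Rule F V)) (s t : Tm F V) : Prop :=
  ∃ u v, Reach E s u ∧ Rew R u v ∧ Reach E v t

/-- `R/E` is terminating from `s`. -/
def TerminatingFrom (R E : Set (Rule F V)) (s : Tm F V) : Prop :=
  ¬ ∃ f : ℕ → Tm F V, f 0 = s ∧ ∀ n, RewMod R E (f n) (f (n + 1))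

/-- `R/E` is terminating. -/
def Terminating (R E : Set (Rule F V)) : Prop :=
  ¬ ∃ f : ℕ → Tm F V, ∀ n, RewMod R E (f n) (f (n + 1))

/-- `t` is reachable from some constant. -/
def FromConst (R : Set (Rule F V)) (t : Tm F V) : Prop :=
  ∃ f : F, Reach R (Tm.app f []) t

/-- The measure `‖t‖`: number of positions of `t` whose subterm is not reachable
from a constant. -/
noncomputable def meas (R : Set (Rule F V)) (t : Tm F V) : ℕ :=
  Nat.card {p : List ℕ // ∃ u, t.subAt p = some u ∧ ¬ FromConst R u}

/-- `t` is a normal form w.r.t. `R/E`. -/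
def NFMod (R E : Set (Rule F V)) (t : Tm F V) : Prop := ¬ ∃ t', RewMod R E t t'

/-- `t` is `R`-irreducible. -/
def NF (R : Set (Rule F V)) (t : Tm F V) : Prop := ¬ ∃ t', Rew R t t'

/-- Innermost rewrite step with `R` (plain rewriting): all proper subterms of the
redex are irreducible. -/
def IRew (R : Set (Rule F V)) (s t : Tm F V) : Prop :=
  ∃ p, RewAt R p s t ∧
    ∀ (q : List ℕ) (w : Tm F V), q ≠ [] → s.subAt (p ++ q) = some w → NF R w

/-- Innermost rewrite step with `R` modulo `E`. -/
def IRewMod (R E : Set (Rule F V)) (s t : Tm F V) : Prop :=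
  ∃ u v, ∃ p : List ℕ, Reach E s u ∧ RewAt R p u v ∧ Reach E v t ∧
    ∀ (q : List ℕ) (w : Tm F V), q ≠ [] → u.subAt (p ++ q) = some w → NFMod R E w

/-- Innermost termination of `R/E`. -/
def ITerminating (R E : Set (Rule F V)) : Prop :=
  ¬ ∃ f : ℕ → Tm F V, ∀ n, IRewMod R E (f n) (f (n + 1))

end Rewriting

section Marking

variable {F V : Type}

/-- A derivation of length `n` with explicit rules, positions and substitutions. -/
def IsDeriv (R : Set (Rule F V)) (n : ℕ) (s : ℕ → Tm F V) (rl : ℕ → Rule F V)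
    (pp : ℕ → List ℕ) (sb : ℕ → V → Tm F V) : Prop :=
  ∀ i < n, rl i ∈ R ∧ RewWith (rl i).lhs (rl i).rhs (pp i) (sb i) (s i) (s (i + 1))

/-- `p'` is strictly below `p̄` : `p̄` is a proper prefix of `p'`. -/
def StrictBelow (pbar p : List ℕ) : Prop := ∃ q, q ≠ [] ∧ p = pbar ++ q

/-- A marking of a derivation. -/
def IsMarking (n : ℕ) (s : ℕ → Tm F V) (rl : ℕ → Rule F V)
    (pp : ℕ → List ℕ) (M : ℕ → List ℕ → Tm F V) : Prop :=
  (∀ p t, (s 0).subAt p = some t → M 0 p = t) ∧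
  ∀ i < n,
    (∀ p, (s (i + 1)).IsPos p → ¬ StrictBelow (pp i) p → M (i + 1) p = M i p) ∧
    (∀ (j : ℕ) (u : Tm F V), (rl i).rhs.subAt [j] = some u → u.IsConst →
        M (i + 1) (pp i ++ [j]) = u) ∧
    (∀ (j : ℕ) (p₁ : List ℕ) (x : V), (rl i).rhs.subAt [j] = some (Tm.var x) →
        (s (i + 1)).IsPos (pp i ++ j :: p₁) →
        ∃ q₀ : List ℕ, (rl i).lhs.subAt q₀ = some (Tm.var x) ∧
          M (i + 1) (pp i ++ j :: p₁) = M i (pp i ++ q₀ ++ p₁))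

end Marking

section WFSig

variable {F V : Type}

/-- Terms respecting the arity function. -/
inductive WFT (ar : F → ℕ) : Tm F V → Prop
  | var (x : V) : WFT ar (Tm.var x)
  | app (f : F) (ts : List (Tm F V)) : ts.length = ar f →
      (∀ t ∈ ts, WFT ar t) → WFT ar (Tm.app f ts)

end WFSig

open scoped Classical in
/-- Replace every occurrence of `u` in a term by `c`, i.e. `NF_{u→c}(·)`. -/
noncomputable def replAll {F V : Type} (u c : Tm F V) : Tm F V → Tm F V
  | Tm.var x => if (Tm.var x : Tm F V) = u then c else Tm.var x
  | Tm.app f ts =>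
    if (Tm.app f ts : Tm F V) = u then c
    else Tm.app f (ts.attach.map (fun t => replAll u c t.1))
decreasing_by all_goals (simp_wf; have := List.sizeOf_lt_of_mem t.2; omega)

/-!
Replacing `u` by `c` in the right-hand sides and adding `c → u` lets every `R`-step `lσ → rσ` be
simulated by the `R'`-step `lσ → NF_{u→c}(r)σ` followed by `c → u`-steps, so an infinite
`R/E`-derivation yields an infinite `R'/E`-derivation.

Conversely, let `φ` replace `c` back by `u`. Since `c` is fresh, `φ` maps `E`-steps to `E`-steps,
the `R'`-step obtained from `l → r` to an `l → r`-step, and a `c → u`-step to no step at all.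
`E`-steps are linear and variable-preserving, so they do not change the number of occurrences of
`c`, which every `c → u`-step decreases. So along an `R'/E`-derivation the pair
`(φ t, #c(t))` descends lexicographically, where the first component moves either by an
`R/E`-step or by `E`-steps, and the second by `<` on ℕ; when `R/E` terminates this cannot go on
forever.
-/

section WellFounded

variable {α β : Type*}

theorem wellFounded_flip_of_map_or_measure_lt {S : α → α → Prop} {T Q : β → β → Prop}
    (φ : α → β) (μ : α → ℕ) (hT : WellFounded (flip T))
    (hQT : ∀ {a b c}, Relation.ReflTransGen Q a b → T b c → T a c)
    (hS : ∀ {a b}, S a b →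
      T (φ a) (φ b) ∨ (Relation.ReflTransGen Q (φ a) (φ b) ∧ μ b < μ a)) :
    WellFounded (flip S) := by
  suffices key : ∀ b, Acc (flip T) b → ∀ n a, Relation.ReflTransGen Q b (φ a) → μ a = n →
      Acc (flip S) a from
    ⟨fun a => key _ (hT.apply _) _ a .refl rfl⟩
  intro b hb
  induction hb with
  | intro b _ ihT =>
    intro n
    induction n using Nat.strong_induction_on with
    | _ n ihn =>
      rintro a hba rfl
      refine ⟨a, fun a' (h : S a a') => ?_⟩
      rcases hS h with hstep | ⟨hQ, hlt⟩
      · exact ihT (φ a') (hQT hba hstep) _ a' .refl rfl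
      · exact ihn _ hlt a' (hba.trans hQ) rfl

theorem wellFounded_flip_of_le_transGen {S T : α → α → Prop} (hT : WellFounded (flip T))
    (hST : ∀ {a b}, S a b → Relation.TransGen T a b) : WellFounded (flip S) :=
  Subrelation.wf (fun h => Relation.transGen_swap.2 (hST h)) hT.transGen

end WellFounded

theorem terminating_iff_wellFounded {F V : Type} {R E : Set (Rule F V)} :
    Terminating R E ↔ WellFounded (flip (RewMod R E)) := by
  rw [wellFounded_iff_isEmpty_descending_chain, isEmpty_subtype, Terminating, not_exists]
  rfl

namespace List

theorem getElem?_set_of_getElem? {α : Type*} {l : List α} {i : ℕ} {a : α} (h : l[i]? = some a)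
    (b : α) : (l.set i b)[i]? = some b := by
  rw [getElem?_set_self (getElem?_eq_some_iff.1 h).1]

theorem sum_map_set_add {α : Type*} (g : α → ℕ) : ∀ {l : List α} {i : ℕ} {a : α},
    l[i]? = some a → ∀ b, ((l.set i b).map g).sum + g a = (l.map g).sum + g b
  | [], _, _, h, _ => by simp at h
  | x :: l, 0, a, h, b => by
    simp only [List.getElem?_cons_zero, Option.some.injEq] at h
    subst h
    simp only [List.set_cons_zero, List.map_cons, List.sum_cons]
    omega
  | x :: l, i + 1, a, h, b => by
    have := sum_map_set_add g (l := l) h b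
    simp only [List.set_cons_succ, List.map_cons, List.sum_cons]
    omega

end List

namespace Tm

variable {F V : Type}

@[induction_eliminator]
theorem induction {motive : Tm F V → Prop} (var : ∀ x, motive (var x))
    (app : ∀ f ts, (∀ t ∈ ts, motive t) → motive (app f ts)) : ∀ t, motive t
  | .var x => var x
  | .app f ts => app f ts fun t _ => induction var app t
decreasing_by all_goals (simp_wf; have := List.sizeOf_lt_of_mem (by assumption); omega)

theorem subst_var (σ : V → Tm F V) (x : V) : (var x).subst σ = σ x := by rw [subst]

theorem subst_app (σ : V → Tm F V) (f : F) (ts : List (Tm F V)) :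
    (app f ts).subst σ = app f (ts.map (subst σ)) := by
  rw [subst]; simp

theorem varList_app (f : F) (ts : List (Tm F V)) :
    (app f ts).varList = (ts.map varList).flatten := by
  rw [varList]; simp

theorem symList_var (x : V) : (var x : Tm F V).symList = [] := by rw [symList]

theorem symList_app (f : F) (ts : List (Tm F V)) :
    (app f ts).symList = f :: (ts.map symList).flatten := by
  rw [symList]; simp

theorem not_mem_symList_of_mem_args {c f : F} {ts : List (Tm F V)}
    (h : c ∉ (app f ts).symList) {t : Tm F V} (ht : t ∈ ts) : c ∉ t.symList := by
  rw [symList_app, List.mem_cons, not_or, List.mem_flatten] at h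
  exact fun hc => h.2 ⟨t.symList, List.mem_map_of_mem ht, hc⟩

theorem app_ne_const_of_not_mem_symList {c f : F} {ts : List (Tm F V)}
    (h : c ∉ (app f ts).symList) : app f ts ≠ app c [] := by
  rintro ⟨⟩
  exact h (by rw [symList_app]; exact List.mem_cons_self)

theorem Ground.ne_var {u : Tm F V} (h : u.Ground) (x : V) : u ≠ var x := by
  rintro rfl; simp [Ground, varList] at h

theorem Ground.of_mem_args {f : F} {ts : List (Tm F V)} (h : (app f ts).Ground) {t : Tm F V}
    (ht : t ∈ ts) : t.Ground := by
  rw [Ground, varList_app, List.flatten_eq_nil_iff] at h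
  exact h _ (List.mem_map_of_mem ht)

theorem Ground.subst_eq {t : Tm F V} (h : t.Ground) (σ : V → Tm F V) : t.subst σ = t := by
  induction t with
  | var x => exact absurd rfl (h.ne_var x)
  | app f ts ih =>
    rw [subst_app, List.map_congr_left fun t ht => ih t ht (h.of_mem_args ht), List.map_id']

theorem const_subst (c : F) (σ : V → Tm F V) : (app c [] : Tm F V).subst σ = app c [] := by
  rw [subst_app]; rfl

theorem subAt_nil (t : Tm F V) : t.subAt [] = some t := by rw [subAt]

theorem replAt_nil (t v : Tm F V) : t.replAt [] v = some v := by rw [replAt]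

theorem subAt_app_cons {ts : List (Tm F V)} {i : ℕ} {w : Tm F V} (h : ts[i]? = some w)
    (f : F) (p : List ℕ) : (app f ts).subAt (i :: p) = w.subAt p := by
  rw [subAt, h]

theorem replAt_app_cons {ts : List (Tm F V)} {i : ℕ} {w : Tm F V} (h : ts[i]? = some w)
    (f : F) (p : List ℕ) (v : Tm F V) :
    (app f ts).replAt (i :: p) v = (w.replAt p v).map fun w' => app f (ts.set i w') := by
  rw [replAt, h]

theorem exists_of_subAt_cons {s w : Tm F V} {i : ℕ} {p : List ℕ}
    (h : s.subAt (i :: p) = some w) :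
    ∃ f ts w₀, s = app f ts ∧ ts[i]? = some w₀ ∧ w₀.subAt p = some w := by
  cases s with
  | var x => simp [subAt] at h
  | app f ts =>
    rw [subAt] at h
    split at h
    · next w₀ hi => exact ⟨f, ts, w₀, rfl, hi, h⟩
    · simp at h

theorem exists_of_replAt_cons {s v t : Tm F V} {i : ℕ} {p : List ℕ}
    (h : s.replAt (i :: p) v = some t) :
    ∃ f ts w₀ w₁, s = app f ts ∧ ts[i]? = some w₀ ∧ w₀.replAt p v = some w₁ ∧
      t = app f (ts.set i w₁) := by
  cases s with
  | var x => simp [replAt] at h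
  | app f ts =>
    rw [replAt] at h
    split at h
    · next w₀ hi =>
      obtain ⟨w₁, hw₁, rfl⟩ := Option.map_eq_some_iff.1 h
      exact ⟨f, ts, w₀, w₁, rfl, hi, hw₁, rfl⟩
    · simp at h

theorem exists_replAt_of_subAt : ∀ {p : List ℕ} {s w : Tm F V}, s.subAt p = some w →
    ∀ v, ∃ t, s.replAt p v = some t
  | [], s, _, _, v => ⟨v, replAt_nil s v⟩
  | i :: p, _, _, h, v => by
    obtain ⟨f, ts, w₀, rfl, hi, hw₀⟩ := exists_of_subAt_cons h
    obtain ⟨t₀, ht₀⟩ := exists_replAt_of_subAt hw₀ v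
    exact ⟨app f (ts.set i t₀), by rw [replAt_app_cons hi, ht₀]; rfl⟩

theorem subAt_of_replAt : ∀ {p : List ℕ} {s v t : Tm F V}, s.replAt p v = some t →
    t.subAt p = some v
  | [], _, _, _, h => by rw [replAt_nil] at h; cases h; exact subAt_nil _
  | i :: p, _, _, _, h => by
    obtain ⟨f, ts, w₀, w₁, rfl, hi, hw₁, rfl⟩ := exists_of_replAt_cons h
    rw [subAt_app_cons (List.getElem?_set_of_getElem? hi w₁)]
    exact subAt_of_replAt hw₁

theorem replAt_replAt : ∀ {p : List ℕ} {s a t : Tm F V}, s.replAt p a = some t →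
    ∀ b, t.replAt p b = s.replAt p b
  | [], _, _, _, h, b => by rw [replAt_nil] at h; cases h; rw [replAt_nil, replAt_nil]
  | i :: p, _, _, _, h, b => by
    obtain ⟨f, ts, w₀, w₁, rfl, hi, hw₁, rfl⟩ := exists_of_replAt_cons h
    rw [replAt_app_cons (List.getElem?_set_of_getElem? hi w₁), replAt_app_cons hi,
      replAt_replAt hw₁ b]
    cases w₀.replAt p b <;> simp [List.set_set]

theorem replAt_self_of_subAt : ∀ {p : List ℕ} {s w : Tm F V}, s.subAt p = some w →
    s.replAt p w = some s
  | [], s, _, h => by rw [subAt_nil] at h; cases h; exact replAt_nil s s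
  | i :: p, _, _, h => by
    obtain ⟨f, ts, w₀, rfl, hi, hw₀⟩ := exists_of_subAt_cons h
    obtain ⟨hlt, rfl⟩ := List.getElem?_eq_some_iff.1 hi
    rw [replAt_app_cons hi, replAt_self_of_subAt hw₀]
    simp

theorem subAt_append : ∀ {p : List ℕ} {s w : Tm F V}, s.subAt p = some w →
    ∀ q, s.subAt (p ++ q) = w.subAt q
  | [], _, _, h, q => by rw [subAt_nil] at h; cases h; rfl
  | i :: p, _, _, h, q => by
    obtain ⟨f, ts, w₀, rfl, hi, hw₀⟩ := exists_of_subAt_cons h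
    rw [List.cons_append, subAt_app_cons hi, subAt_append hw₀]

theorem replAt_append : ∀ {p : List ℕ} {s w : Tm F V}, s.subAt p = some w →
    ∀ {q v w'}, w.replAt q v = some w' → s.replAt (p ++ q) v = s.replAt p w'
  | [], _, _, h, _, _, _, hr => by
    rw [subAt_nil] at h; cases h; rw [List.nil_append, replAt_nil, hr]
  | i :: p, _, _, h, _, _, _, hr => by
    obtain ⟨f, ts, w₀, rfl, hi, hw₀⟩ := exists_of_subAt_cons h
    rw [List.cons_append, replAt_app_cons hi, replAt_app_cons hi, replAt_append hw₀ hr]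

variable [DecidableEq F]

def symCount (c : F) (t : Tm F V) : ℕ := t.symList.count c

theorem symCount_app (c f : F) (ts : List (Tm F V)) :
    symCount c (app f ts) = (if f = c then 1 else 0) + (ts.map (symCount c)).sum := by
  rw [symCount, symList_app, List.count_cons, List.count_flatten, List.map_map]
  by_cases h : f = c <;> simp [h, add_comm] <;> rfl

theorem symCount_eq_zero {c : F} {t : Tm F V} (h : c ∉ t.symList) : symCount c t = 0 :=
  List.count_eq_zero_of_not_mem h

theorem symCount_const_self (c : F) : symCount c (app c [] : Tm F V) = 1 := by
  simp [symCount_app]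

theorem symCount_replAt {c : F} : ∀ {p : List ℕ} {s w w' t : Tm F V},
    s.subAt p = some w → s.replAt p w' = some t →
    symCount c t + symCount c w = symCount c s + symCount c w'
  | [], _, _, _, _, hs, hr => by
    rw [subAt_nil] at hs; rw [replAt_nil] at hr; cases hs; cases hr; omega
  | i :: p, _, _, _, _, hs, hr => by
    obtain ⟨f, ts, w₀, rfl, hi, hw₀⟩ := exists_of_subAt_cons hs
    rw [replAt_app_cons hi] at hr
    obtain ⟨w₁, hw₁, rfl⟩ := Option.map_eq_some_iff.1 hr
    have ih := symCount_replAt (c := c) hw₀ hw₁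
    have hsum := List.sum_map_set_add (symCount c) hi w₁
    rw [symCount_app, symCount_app]
    omega

theorem symCount_subst (c : F) (σ : V → Tm F V) (t : Tm F V) :
    symCount c (t.subst σ) = symCount c t + (t.varList.map fun x => symCount c (σ x)).sum := by
  induction t with
  | var x => simp [subst_var, symCount, symList_var, varList]
  | app f ts ih =>
    rw [subst_app, symCount_app, symCount_app, varList_app, List.map_map,
      List.map_congr_left (f := symCount c ∘ subst σ) fun t ht => ih t ht,
      List.sum_map_add, List.map_flatten, List.sum_flatten, List.map_map, List.map_map]
    simp only [Function.comp_def]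
    omega

end Tm

open Tm

theorem Rule.Permutative.varList_perm {F V : Type} {r : Rule F V} (h : r.Permutative) :
    r.lhs.varList.Perm r.rhs.varList :=
  (List.perm_ext_iff_of_nodup h.2.1 h.2.2.1).2 h.2.2.2.2.2.2

section Counting

variable {F V : Type} [DecidableEq F] {c : F}

theorem symCount_eq_of_rewWith {l r : Tm F V} (hl : c ∉ l.symList) (hr : c ∉ r.symList)
    (hvars : l.varList.Perm r.varList) {p : List ℕ} {σ : V → Tm F V} {s t : Tm F V}
    (h : RewWith l r p σ s t) : symCount c s = symCount c t := by
  have hrepl := symCount_replAt (c := c) h.1 h.2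
  have hsum := (hvars.map fun x => symCount c (σ x)).sum_eq
  rw [symCount_subst, symCount_subst, symCount_eq_zero hl, symCount_eq_zero hr] at hrepl
  omega

theorem symCount_eq_of_reach {E : Set (Rule F V)} (hE : ∀ r ∈ E, r.Permutative)
    (hc : ∀ r ∈ E, c ∉ r.lhs.symList ∧ c ∉ r.rhs.symList) {s t : Tm F V} (h : Reach E s t) :
    symCount c s = symCount c t := by
  induction h with
  | refl => rfl
  | tail _ hstep ih =>
    obtain ⟨p, r, hr, σ, hw⟩ := hstep
    exact ih.trans (symCount_eq_of_rewWith (hc r hr).1 (hc r hr).2 (hE r hr).varList_perm hw)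

theorem symCount_lt_of_rewWith_const {u : Tm F V} (hu : u.Ground) (hcu : c ∉ u.symList)
    {p : List ℕ} {σ : V → Tm F V} {s t : Tm F V} (h : RewWith (app c []) u p σ s t) :
    symCount c t < symCount c s := by
  have := symCount_replAt (c := c) h.1 h.2
  rw [const_subst, hu.subst_eq, symCount_const_self, symCount_eq_zero hcu] at this
  omega

end Counting

section ReplAll

variable {F V : Type}

theorem replAll_self (u w : Tm F V) : replAll u w u = w := by
  cases u <;> rw [replAll, if_pos rfl]

theorem replAll_var_of_ne {u w : Tm F V} {x : V} (h : var x ≠ u) :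
    replAll u w (var x) = var x := by
  rw [replAll, if_neg h]

theorem replAll_app_of_ne {u w : Tm F V} {f : F} {ts : List (Tm F V)} (h : app f ts ≠ u) :
    replAll u w (app f ts) = app f (ts.map (replAll u w)) := by
  rw [replAll, if_neg h]; simp

theorem replAll_const_var (c : F) (w : Tm F V) (x : V) : replAll (app c []) w (var x) = var x :=
  replAll_var_of_ne nofun

theorem replAll_const_of_not_mem_symList {c : F} (w : Tm F V) {t : Tm F V}
    (h : c ∉ t.symList) : replAll (app c []) w t = t := by
  induction t with
  | var x => exact replAll_const_var c w x
  | app f ts ih =>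
    rw [replAll_app_of_ne (app_ne_const_of_not_mem_symList h),
      List.map_congr_left fun t ht => ih t ht (not_mem_symList_of_mem_args h ht), List.map_id']

theorem replAll_const_subst {c : F} {w : Tm F V} (hw : w.Ground) (σ : V → Tm F V)
    (t : Tm F V) :
    replAll (app c []) w (t.subst σ) =
      (replAll (app c []) w t).subst (replAll (app c []) w ∘ σ) := by
  induction t with
  | var x => rw [subst_var, replAll_const_var, subst_var]; rfl
  | app f ts ih =>
    by_cases he : app f ts = app c []
    · obtain ⟨rfl, rfl⟩ := app.inj he
      rw [const_subst, replAll_self, hw.subst_eq]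
    · have hne : app f (ts.map (subst σ)) ≠ app c [] := by simpa using he
      rw [subst_app, replAll_app_of_ne hne, replAll_app_of_ne he, subst_app, List.map_map,
        List.map_map]
      exact congrArg _ (List.map_congr_left fun t ht => ih t ht)

theorem replAll_const_replAll {c : F} {u : Tm F V} (hu : u.Ground) {t : Tm F V}
    (h : c ∉ t.symList) : replAll (app c []) u (replAll u (app c []) t) = t := by
  induction t with
  | var x => rw [replAll_var_of_ne (hu.ne_var x).symm, replAll_const_var]
  | app f ts ih =>
    by_cases he : app f ts = u
    · rw [he, replAll_self, replAll_self]
    · have hne : app f (ts.map (replAll u (app c []))) ≠ app c [] := fun he' =>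
        h (by rw [symList_app, (app.inj he').1]; exact List.mem_cons_self)
      rw [replAll_app_of_ne he, replAll_app_of_ne hne, List.map_map]
      exact congrArg _ ((List.map_congr_left fun t ht =>
        ih t ht (not_mem_symList_of_mem_args h ht)).trans (List.map_id _))

theorem subAt_replAll_const {c : F} {w : Tm F V} : ∀ {p : List ℕ} {s t : Tm F V},
    s.subAt p = some t → (replAll (app c []) w s).subAt p = some (replAll (app c []) w t)
  | [], _, _, h => by rw [subAt_nil] at h; cases h; rw [subAt_nil]
  | i :: p, _, _, h => by
    obtain ⟨f, ts, w₀, rfl, hi, hw₀⟩ := exists_of_subAt_cons h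
    have hne : app f ts ≠ app c [] := by rintro ⟨⟩; simp at hi
    rw [replAll_app_of_ne hne, subAt_app_cons (by rw [List.getElem?_map, hi]; rfl)]
    exact subAt_replAll_const hw₀

theorem replAt_replAll_const {c : F} {w : Tm F V} : ∀ {p : List ℕ} {s v t : Tm F V},
    s.replAt p v = some t →
    (replAll (app c []) w s).replAt p (replAll (app c []) w v) = some (replAll (app c []) w t)
  | [], _, _, _, h => by rw [replAt_nil] at h; cases h; rw [replAt_nil]
  | i :: p, _, _, _, h => by
    obtain ⟨f, ts, w₀, w₁, rfl, hi, hw₁, rfl⟩ := exists_of_replAt_cons h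
    have hts : ts ≠ [] := by rintro rfl; simp at hi
    have hne : app f ts ≠ app c [] := by simp [hts]
    have hne' : app f (ts.set i w₁) ≠ app c [] := by simp [hts]
    rw [replAll_app_of_ne hne, replAll_app_of_ne hne', List.map_set,
      replAt_app_cons (by rw [List.getElem?_map, hi]; rfl), replAt_replAll_const hw₁]
    rfl

end ReplAll

section Reachability

variable {F V : Type} {R E : Set (Rule F V)}

theorem rewMod_of_reach_of_rewMod {s t v : Tm F V} (hst : Reach E s t) (htv : RewMod R E t v) :
    RewMod R E s v :=
  let ⟨a, b, hta, hab, hbv⟩ := htv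
  ⟨a, b, hst.trans hta, hab, hbv⟩

theorem rewMod_of_rewMod_of_reach {s t v : Tm F V} (hst : RewMod R E s t) (htv : Reach E t v) :
    RewMod R E s v :=
  let ⟨a, b, hsa, hab, hbt⟩ := hst
  ⟨a, b, hsa, hab, hbt.trans htv⟩

theorem rew_of_subAt_of_replAt {a b s t : Tm F V} {p : List ℕ} (h : Rew R a b)
    (hs : s.subAt p = some a) (ht : s.replAt p b = some t) : Rew R s t := by
  obtain ⟨q, r, hr, σ, hq₁, hq₂⟩ := h
  exact ⟨p ++ q, r, hr, σ, by rw [subAt_append hs]; exact hq₁,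
    by rw [replAt_append hs hq₂]; exact ht⟩

theorem reach_of_subAt_of_replAt {a b : Tm F V} (h : Reach R a b) :
    ∀ {s t : Tm F V} {p : List ℕ}, s.subAt p = some a → s.replAt p b = some t → Reach R s t := by
  induction h with
  | refl =>
    intro s t p hs ht
    rw [replAt_self_of_subAt hs] at ht
    cases ht
    exact .refl
  | @tail m b _ hmb ih =>
    intro s t p hs ht
    obtain ⟨s', hs'⟩ := exists_replAt_of_subAt hs m
    refine (ih hs hs').tail (rew_of_subAt_of_replAt hmb (subAt_of_replAt hs') ?_)
    rwa [replAt_replAt hs']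

theorem reach_app_map (f : F) {g h : Tm F V → Tm F V} {ts : List (Tm F V)}
    (hgh : ∀ t ∈ ts, Reach R (g t) (h t)) : Reach R (app f (ts.map g)) (app f (ts.map h)) := by
  suffices ∀ pre, Reach R (app f (pre ++ ts.map g)) (app f (pre ++ ts.map h)) by
    simpa using this []
  induction ts with
  | nil => exact fun _ => .refl
  | cons t ts ih =>
    intro pre
    have hhead : Reach R (app f (pre ++ g t :: ts.map g)) (app f (pre ++ h t :: ts.map g)) := by
      refine reach_of_subAt_of_replAt (hgh t List.mem_cons_self) (p := [pre.length]) ?_ ?_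
      · rw [subAt_app_cons (w := g t) (by simp), subAt_nil]
      · rw [replAt_app_cons (w := g t) (by simp), replAt_nil]; simp
    have htail := ih (fun t' ht' => hgh t' (List.mem_cons_of_mem _ ht')) (pre ++ [h t])
    simp only [List.append_assoc, List.singleton_append] at htail
    rw [List.map_cons, List.map_cons]
    exact hhead.trans htail

theorem reach_subst_replAll {c : F} {u : Tm F V} (hcu : (⟨app c [], u⟩ : Rule F V) ∈ R)
    (hu : u.Ground) (σ : V → Tm F V) (t : Tm F V) :
    Reach R ((replAll u (app c []) t).subst σ) (t.subst σ) := by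
  induction t with
  | var x => rw [replAll_var_of_ne (hu.ne_var x).symm]; exact .refl
  | app f ts ih =>
    by_cases he : app f ts = u
    · rw [he, replAll_self]
      exact .single ⟨[], _, hcu, σ, subAt_nil _, by rw [replAt_nil, hu.subst_eq]⟩
    · rw [replAll_app_of_ne he, subst_app, subst_app, List.map_map]
      exact reach_app_map f ih

end Reachability

/-- The system `R'` of the theorem. -/
def introduceConst {F V : Type} (R : Set (Rule F V)) (u : Tm F V) (c : F) : Set (Rule F V) :=
  insert ⟨app c [], u⟩ {r' | ∃ r ∈ R, r' = ⟨r.lhs, replAll u (app c []) r.rhs⟩}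

section Simulation

variable {F V : Type} {R E : Set (Rule F V)} {u : Tm F V} {c : F}

theorem transGen_rewMod_of_rewMod_of_reach {s a b t : Tm F V} (hsa : RewMod R E s a)
    (hab : Reach R a b) (hbt : Reach E b t) : Relation.TransGen (RewMod R E) s t := by
  induction hab using Relation.ReflTransGen.head_induction_on generalizing s with
  | refl => exact .single (rewMod_of_rewMod_of_reach hsa hbt)
  | head ha _ ih => exact .head hsa (ih ⟨_, _, .refl, ha, .refl⟩)

theorem transGen_rewMod_introduceConst_of_rewMod (hu : u.Ground) {s t : Tm F V}
    (h : RewMod R E s t) : Relation.TransGen (RewMod (introduceConst R u c) E) s t := by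
  obtain ⟨a, b, hsa, ⟨p, r, hr, σ, hla, hab⟩, hbt⟩ := h
  obtain ⟨a', ha'⟩ := exists_replAt_of_subAt hla ((replAll u (app c []) r.rhs).subst σ)
  have hstep : RewMod (introduceConst R u c) E s a' :=
    ⟨a, a', hsa, ⟨p, _, .inr ⟨r, hr, rfl⟩, σ, hla, ha'⟩, .refl⟩
  have hback : Reach (introduceConst R u c) a' b :=
    reach_of_subAt_of_replAt (reach_subst_replAll (.inl rfl) hu σ r.rhs) (subAt_of_replAt ha')
      (by rwa [replAt_replAt ha'])
  exact transGen_rewMod_of_rewMod_of_reach hstep hback hbt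

theorem rewWith_replAll_const (hu : u.Ground) {l r r' : Tm F V} (hl : c ∉ l.symList)
    {p : List ℕ} {σ : V → Tm F V} {s t : Tm F V} (h : RewWith l r p σ s t)
    (hr : replAll (app c []) u (r.subst σ) = r'.subst (replAll (app c []) u ∘ σ)) :
    RewWith l r' p (replAll (app c []) u ∘ σ) (replAll (app c []) u s)
      (replAll (app c []) u t) := by
  constructor
  · have := subAt_replAll_const (c := c) (w := u) h.1
    rwa [replAll_const_subst hu, replAll_const_of_not_mem_symList _ hl] at this
  · rw [← hr]
    exact replAt_replAll_const h.2

theorem reach_replAll_const (hu : u.Ground) (hE : ∀ r ∈ E, c ∉ r.lhs.symList ∧ c ∉ r.rhs.symList)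
    {s t : Tm F V} (h : Reach E s t) :
    Reach E (replAll (app c []) u s) (replAll (app c []) u t) := by
  induction h with
  | refl => exact .refl
  | tail _ hst ih =>
    obtain ⟨p, r, hr, σ, hw⟩ := hst
    refine ih.tail ⟨p, r, hr, _, rewWith_replAll_const hu (hE r hr).1 hw ?_⟩
    rw [replAll_const_subst hu, replAll_const_of_not_mem_symList _ (hE r hr).2]

theorem replAll_const_eq_of_rewWith (hu : u.Ground) (hcu : c ∉ u.symList) {p : List ℕ}
    {σ : V → Tm F V} {s t : Tm F V} (h : RewWith (app c []) u p σ s t) :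
    replAll (app c []) u s = replAll (app c []) u t := by
  have hs := subAt_replAll_const (c := c) (w := u) h.1
  have ht := replAt_replAll_const (c := c) (w := u) h.2
  rw [const_subst, replAll_self] at hs
  rw [hu.subst_eq, replAll_const_of_not_mem_symList _ hcu, replAt_self_of_subAt hs] at ht
  exact Option.some.inj ht

theorem rewMod_replAll_or_of_rewMod_introduceConst [DecidableEq F]
    (hE : ∀ r ∈ E, r.Permutative) (hu : u.Ground)
    (hc : (∀ r ∈ R ∪ E, c ∉ r.lhs.symList ∧ c ∉ r.rhs.symList) ∧ c ∉ u.symList)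
    {s t : Tm F V} (h : RewMod (introduceConst R u c) E s t) :
    RewMod R E (replAll (app c []) u s) (replAll (app c []) u t) ∨
      Reach E (replAll (app c []) u s) (replAll (app c []) u t) ∧ symCount c t < symCount c s := by
  obtain ⟨hcR, hcu⟩ := hc
  have hcE r (hr : r ∈ E) := hcR r (.inr hr)
  obtain ⟨a, b, hsa, ⟨p, r', hr', σ, hw⟩, hbt⟩ := h
  have hsa' := reach_replAll_const hu hcE hsa
  have hbt' := reach_replAll_const hu hcE hbt
  rcases hr' with rfl | ⟨r, hr, rfl⟩
  · right
    refine ⟨?_, ?_⟩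
    · rw [replAll_const_eq_of_rewWith hu hcu hw] at hsa'
      exact hsa'.trans hbt'
    · rw [symCount_eq_of_reach hE hcE hsa, ← symCount_eq_of_reach hE hcE hbt]
      exact symCount_lt_of_rewWith_const hu hcu hw
  · left
    refine ⟨_, _, hsa', ⟨p, r, hr, _, rewWith_replAll_const hu (hcR r (.inl hr)).1 hw ?_⟩, hbt'⟩
    rw [replAll_const_subst hu, replAll_const_replAll hu (hcR r (.inl hr)).2]

end Simulation

theorem stmt16_general {F V : Type} (R E : Set (Rule F V)) (hE : PermutativeTheory E)
    (u : Tm F V) (hg : u.Ground)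
    (c : F)
    (hfresh : (∀ r ∈ R ∪ E, c ∉ r.lhs.symList ∧ c ∉ r.rhs.symList) ∧ c ∉ u.symList) :
    Terminating R E ↔
      Terminating
        (insert (⟨Tm.app c [], u⟩ : Rule F V)
          {r' | ∃ r ∈ R, r' = ⟨r.lhs, replAll u (Tm.app c []) r.rhs⟩})
        E := by
  classical
  rw [terminating_iff_wellFounded, terminating_iff_wellFounded]
  constructor
  · intro hT
    exact wellFounded_flip_of_map_or_measure_lt (replAll (app c []) u) (symCount c) hT
      rewMod_of_reach_of_rewMod (rewMod_replAll_or_of_rewMod_introduceConst hE.1 hg hfresh)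
  · intro hT'
    exact wellFounded_flip_of_le_transGen hT' (transGen_rewMod_introduceConst_of_rewMod hg)

/-- For a non-constant ground proper subterm `u` of some right-hand side
of `R` and a fresh constant `c`, with `R' = {c → u} ∪ {l → NF_{u→c}(r) : l → r ∈ R}`:
`R/E` is terminating iff `R'/E` is terminating. -/
theorem stmt16 {F V : Type} (R E : Set (Rule F V)) (hE : PermutativeTheory E)
    (u : Tm F V) (hg : u.Ground) (hnc : ¬ u.IsConst)
    (hsub : ∃ r ∈ R, ∃ p : List ℕ, p ≠ [] ∧ r.rhs.subAt p = some u)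
    (c : F)
    (hfresh : (∀ r ∈ R ∪ E, c ∉ r.lhs.symList ∧ c ∉ r.rhs.symList) ∧ c ∉ u.symList) :
    Terminating R E ↔
      Terminating
        (insert (⟨Tm.app c [], u⟩ : Rule F V)
          {r' | ∃ r ∈ R, r' = ⟨r.lhs, replAll u (Tm.app c []) r.rhs⟩})
        E :=
  stmt16_general R E hE u hg c hfresh
end

section
/- If R is a TRS in which every rule is height-preserving or height-decreasing (i.e., height(σ(r)) ≤ height(σ(l)) for every rule l → r and substitution σ used), and R is non-terminating, then there exists an infinite R-derivation containing infinitely many rewrite steps at the root position λ. -/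
/-! Induct on the height of the initial term of an infinite derivation. Rewrite steps never
increase the height, so if only finitely many steps are at the root, from some point on the
derivation rewrites only inside the arguments of a fixed root symbol; by pigeonhole one argument
is rewritten infinitely often, which yields an infinite derivation from a term of smaller
height. -/

section Chains

variable {α : Type*} {r : α → α → Prop} {a : ℕ → α} {p : ℕ → Prop}

theorem eq_of_not_step_between (heq : ∀ n, ¬p n → a (n + 1) = a n) {m k : ℕ} (hmk : m ≤ k)
    (hgap : ∀ n, m ≤ n → n < k → ¬p n) : a k = a m := by
  induction k, hmk using Nat.le_induction with
  | base => rfl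
  | succ k hmk ih =>
    rw [heq k (hgap k hmk k.lt_succ_self),
      ih fun n h₁ h₂ => hgap n h₁ (h₂.trans k.lt_succ_self)]

theorem exists_chain_of_infinite_steps (hp : {n | p n}.Infinite)
    (hr : ∀ n, p n → r (a n) (a (n + 1))) (heq : ∀ n, ¬p n → a (n + 1) = a n) :
    ∃ c : ℕ → α, c 0 = a 0 ∧ ∀ k, r (c k) (c (k + 1)) := by
  have hmem : ∀ k, p (Nat.nth p k) := Nat.nth_mem_of_infinite hp
  refine ⟨fun k => a (Nat.nth p k), ?_, fun k => ?_⟩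
  · refine eq_of_not_step_between heq (Nat.zero_le _) fun n _ hn hpn => ?_
    rw [Nat.nth_zero] at hn
    exact (Nat.sInf_le hpn).not_gt hn
  · have hlt := Nat.nth_strictMono hp (Nat.lt_add_one k)
    have hgap := eq_of_not_step_between heq hlt fun n h₁ h₂ hpn =>
      (Nat.le_nth_of_lt_nth_succ h₂ hpn).not_gt h₁
    change r (a (Nat.nth p k)) (a (Nat.nth p (k + 1)))
    rw [hgap]
    exact hr _ (hmem k)

theorem List.exists_mem_chain_of_set {xs : ℕ → List α} {i : ℕ → ℕ} {y : ℕ → α}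
    (hxs : ∀ n, xs (n + 1) = (xs n).set (i n) (y n))
    (hr : ∀ n, ∃ x, (xs n)[i n]? = some x ∧ r x (y n)) :
    ∃ x ∈ xs 0, ∃ c : ℕ → α, c 0 = x ∧ ∀ k, r (c k) (c (k + 1)) := by
  have hlen : ∀ n, (xs n).length = (xs 0).length := by
    intro n
    induction n with
    | zero => rfl
    | succ n ih => rw [hxs, List.length_set, ih]
  have hi : ∀ n, i n < (xs 0).length := fun n => by
    obtain ⟨x, hx, -⟩ := hr n
    exact hlen n ▸ (List.getElem?_eq_some_iff.1 hx).1
  obtain ⟨b, hb⟩ := Finite.exists_infinite_fiber fun n => (⟨i n, hi n⟩ : Fin (xs 0).length)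
  set x₀ := (xs 0)[b.1]
  -- `b` is in range for every `n`, so the default `x₀` is never used.
  set entry : ℕ → α := fun n => ((xs n)[b.1]?).getD x₀
  have hS : {n | i n = b}.Infinite := by
    convert Set.infinite_coe_iff.1 hb using 1
    ext n
    simp [Fin.ext_iff]
  have hstep : ∀ n, i n = b → r (entry n) (entry (n + 1)) := by
    intro n hn
    obtain ⟨x, hx, hxy⟩ := hr n
    simp only [entry, hxs, ← hn, List.getElem?_set_self ((hlen n).symm ▸ hi n), hx,
      Option.getD_some]
    exact hxy
  have heq : ∀ n, i n ≠ b → entry (n + 1) = entry n := fun n hn => by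
    simp only [entry, hxs, List.getElem?_set_ne hn]
  obtain ⟨c, hc₀, hc⟩ := exists_chain_of_infinite_steps hS hstep heq
  refine ⟨x₀, List.getElem_mem _, c, ?_, hc⟩
  simp [hc₀, entry, x₀]

end Chains

namespace Tm

variable {F V : Type}

theorem height_app (f : F) (ts : List (Tm F V)) :
    (app f ts).height = ts.foldr (fun t m => max (t.height + 1) m) 0 := by
  rw [height]
  exact List.foldr_attach (f := fun (t : Tm F V) m => max (t.height + 1) m)

theorem height_app_le_iff {f : F} {ts : List (Tm F V)} {h : ℕ} :
    (app f ts).height ≤ h ↔ ∀ t ∈ ts, t.height < h := by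
  rw [height_app]
  induction ts with
  | nil => simp
  | cons t ts ih => simp [ih]

theorem height_lt_of_mem {f : F} {ts : List (Tm F V)} {t : Tm F V} (ht : t ∈ ts) :
    t.height < (app f ts).height :=
  height_app_le_iff.1 le_rfl t ht

theorem height_set_le {f : F} {ts : List (Tm F V)} {i : ℕ} {u u' : Tm F V}
    (hu : ts[i]? = some u) (hle : u'.height ≤ u.height) :
    (app f (ts.set i u')).height ≤ (app f ts).height :=
  height_app_le_iff.2 fun _ ht => (List.mem_or_eq_of_mem_set ht).elim height_lt_of_mem
    fun htu => htu ▸ hle.trans_lt (height_lt_of_mem (List.mem_of_getElem? hu))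

theorem height_replAt_le {u u' : Tm F V} (hle : u'.height ≤ u.height) :
    ∀ {p : List ℕ} {s t : Tm F V}, s.subAt p = some u → s.replAt p u' = some t →
      t.height ≤ s.height
  | [], s, t, hs, ht => by
    simp only [subAt, replAt, Option.some.injEq] at hs ht
    exact ht ▸ hs ▸ hle
  | _ :: _, var _, _, hs, _ => by simp [subAt] at hs
  | i :: p, app f ts, t, hs, ht => by
    cases hw : ts[i]? with
    | none => simp [subAt, hw] at hs
    | some w =>
      simp only [subAt, hw] at hs
      simp only [replAt, hw, Option.map_eq_some_iff] at ht
      obtain ⟨w', hw', rfl⟩ := ht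
      exact height_set_le hw (height_replAt_le hle hs hw')

end Tm

section Rewriting

variable {F V : Type} {R : Set (Rule F V)}

theorem Rew.height_le
    (hR : ∀ r ∈ R, ∀ σ : V → Tm F V, (r.rhs.subst σ).height ≤ (r.lhs.subst σ).height)
    {s t : Tm F V} (h : Rew R s t) : t.height ≤ s.height := by
  obtain ⟨p, r, hr, σ, hs, ht⟩ := h
  exact Tm.height_replAt_le (hR r hr σ) hs ht

theorem RewAt.exists_of_cons {i : ℕ} {q : List ℕ} {s t : Tm F V} (h : RewAt R (i :: q) s t) :
    ∃ (f : F) (ts : List (Tm F V)) (u u' : Tm F V),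
      s = .app f ts ∧ ts[i]? = some u ∧ RewAt R q u u' ∧ t = .app f (ts.set i u') := by
  obtain ⟨r, hr, σ, hs, ht⟩ := h
  cases s with
  | var x => simp [Tm.subAt] at hs
  | app f ts =>
    cases hw : ts[i]? with
    | none => simp [Tm.subAt, hw] at hs
    | some w =>
      simp only [Tm.subAt, hw] at hs
      simp only [Tm.replAt, hw, Option.map_eq_some_iff] at ht
      obtain ⟨w', hw', rfl⟩ := ht
      exact ⟨f, ts, w, w', rfl, hw, ⟨r, hr, σ, hs, hw'⟩, rfl⟩

theorem exists_arg_rew_chain_of_ne_nil {g : ℕ → Tm F V} {pp : ℕ → List ℕ}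
    (hg : ∀ n, RewAt R (pp n) (g n) (g (n + 1))) (hpp : ∀ n, pp n ≠ []) :
    ∃ (f : F) (ts : List (Tm F V)), g 0 = .app f ts ∧
      ∃ t ∈ ts, ∃ c : ℕ → Tm F V, c 0 = t ∧ ∀ k, Rew R (c k) (c (k + 1)) := by
  have hcons : ∀ n, ∃ i q, pp n = i :: q := fun n => List.exists_cons_of_ne_nil (hpp n)
  choose i q hiq using hcons
  choose f ts u u' hg₀ hu hstep hg₁ using fun n => (hiq n ▸ hg n).exists_of_cons
  have hts : ∀ n, ts (n + 1) = (ts n).set (i n) (u' n) := fun n => by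
    have := (hg₀ (n + 1)).symm.trans (hg₁ n)
    injection this
  exact ⟨f 0, ts 0, hg₀ 0,
    List.exists_mem_chain_of_set hts fun n => ⟨u n, hu n, q n, hstep n⟩⟩

theorem height_le_of_rew_chain
    (hR : ∀ r ∈ R, ∀ σ : V → Tm F V, (r.rhs.subst σ).height ≤ (r.lhs.subst σ).height)
    {g : ℕ → Tm F V} (hg : ∀ n, Rew R (g n) (g (n + 1))) (n : ℕ) :
    (g n).height ≤ (g 0).height := by
  induction n with
  | zero => rfl
  | succ n ih => exact ((hg n).height_le hR).trans ih

end Rewriting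

/-- If every rule of `R` is height-preserving or height-decreasing under
every substitution and `R` is non-terminating, then there is an infinite `R`-derivation
with infinitely many rewrite steps at the root position. -/
theorem stmt19 {F V : Type} (R : Set (Rule F V))
    (hR : ∀ r ∈ R, ∀ σ : V → Tm F V, (r.rhs.subst σ).height ≤ (r.lhs.subst σ).height)
    (hnt : ∃ f : ℕ → Tm F V, ∀ n, Rew R (f n) (f (n + 1))) :
    ∃ (f : ℕ → Tm F V) (pp : ℕ → List ℕ),
      (∀ n, RewAt R (pp n) (f n) (f (n + 1))) ∧ ∀ N, ∃ n ≥ N, pp n = [] := by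
  obtain ⟨g, hg⟩ := hnt
  induction hh : (g 0).height using Nat.strong_induction_on generalizing g with
  | _ h ih =>
    choose pp hpp using hg
    by_cases hroot : ∀ N, ∃ n ≥ N, pp n = []
    · exact ⟨g, pp, hpp, hroot⟩
    push Not at hroot
    obtain ⟨N, hN⟩ := hroot
    obtain ⟨f, ts, hgN, t, ht, c, rfl, hc⟩ :=
      exists_arg_rew_chain_of_ne_nil (g := fun n => g (N + n)) (fun n => hpp (N + n))
        fun n => hN _ (Nat.le_add_right N n)
    have hlt : (c 0).height < h := calc
      (c 0).height < (g N).height := hgN ▸ Tm.height_lt_of_mem ht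
      _ ≤ h := hh ▸ height_le_of_rew_chain hR (fun n => ⟨pp n, hpp n⟩) N
    exact ih _ hlt c hc rfl
end
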